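/- Let U be the evolution family U(t,s)x = e^{-(t-s)}x on R^2 and P(t)(x1,x2) = (x1,0), Q(t) = Id − P(t). Then ||U(t,s)P(s)|| ≤ e^{-(t-s)} and ||U(t,s)^{-1}Q(t)|| ≤ e^{-(t-s)+2t} for all t ≥ s ≥ 0, yet U does not admit exponential dichotomy with projection P: there are no N ≥ 1, α ≥ 0, ν > 0 with ν such that ||U_Q(s,t)x|| ≤ N e^{αt} e^{-ν(t-s)}||x|| together with the requirement that ||U(t,t0)Q(t0)x0|| → ∞ for Q(t0)x0 ≠ 0; indeed ||U(t,t0)Q(t0)x0|| = e^{-(t-t0)}||Q(t0)x0|| → 0. -/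
import Mathlib


open Real Filter

/-- The vector `(a, b)` in `ℝ²` with the Euclidean norm. -/
noncomputable def vec2 (a b : ℝ) : EuclideanSpace ℝ (Fin 2) :=
  (WithLp.equiv 2 (Fin 2 → ℝ)).symm ![a, b]

lemma vec2_norm (a b : ℝ) : ‖vec2 a b‖ = Real.sqrt (a ^ 2 + b ^ 2) := by
  rw [EuclideanSpace.norm_eq]
  simp [vec2, Fin.sum_univ_two, sq_abs]

lemma vec2_norm_left (a : ℝ) : ‖vec2 a 0‖ = |a| := by
  rw [vec2_norm]; simp [Real.sqrt_sq_eq_abs]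

lemma vec2_norm_right (b : ℝ) : ‖vec2 0 b‖ = |b| := by
  rw [vec2_norm]; simp [Real.sqrt_sq_eq_abs]

lemma coord_le_norm (v : EuclideanSpace ℝ (Fin 2)) (i : Fin 2) : |v i| ≤ ‖v‖ := by
  rw [EuclideanSpace.norm_eq]
  rw [show |v i| = Real.sqrt (‖v i‖ ^ 2) by simp [Real.sqrt_sq_eq_abs]]
  apply Real.sqrt_le_sqrt
  exact Finset.single_le_sum (f := fun j => ‖v j‖ ^ 2)
    (fun j _ => by positivity) (Finset.mem_univ i)

/-- For the evolution family `U(t,s)x = e^{-(t-s)}x` on `ℝ²` with `P(t)(x₁,x₂) = (x₁,0)`,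
`Q(t) = Id - P(t)`: we have `‖U(t,s)P(s)x‖ ≤ e^{-(t-s)}‖x‖` and
`‖U(t,s)⁻¹ Q(t) x‖ ≤ e^{-(t-s)+2t}‖x‖` for `t ≥ s ≥ 0`, yet `U` does not admit an
exponential dichotomy (in the sense of the paper) with projection `P`: since
`U_Q(s,t)(0,x) = (0, e^{t-s}x)`, there are no `N ≥ 1`, `α ≥ 0`, `ν > 0` with `α < ν`
such that `e^{t-s}|x| ≤ N e^{αt} e^{-ν(t-s)}|x|` for all `t ≥ s ≥ 0`; indeed
`‖U(t,t₀)Q(t₀)x₀‖ = e^{-(t-t₀)}‖Q(t₀)x₀‖ → 0` instead of `→ ∞`. -/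
theorem stmt_17
    (U : ℝ → ℝ → EuclideanSpace ℝ (Fin 2) → EuclideanSpace ℝ (Fin 2))
    (hU : ∀ t s v, U t s v = Real.exp (-(t - s)) • v)
    (P Q : ℝ → EuclideanSpace ℝ (Fin 2) → EuclideanSpace ℝ (Fin 2))
    (hP : ∀ t v, P t v = vec2 (v 0) 0) (hQ : ∀ t v, Q t v = vec2 0 (v 1)) :
    (∀ t s : ℝ, 0 ≤ s → s ≤ t → ∀ v, ‖U t s (P s v)‖ ≤ Real.exp (-(t - s)) * ‖v‖) ∧
    (∀ t s : ℝ, 0 ≤ s → s ≤ t → ∀ v,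
      ‖Real.exp (t - s) • Q t v‖ ≤ Real.exp (-(t - s) + 2 * t) * ‖v‖) ∧
    (¬ ∃ (N α ν : ℝ), 1 ≤ N ∧ 0 ≤ α ∧ 0 < ν ∧ α < ν ∧
      ∀ t s x : ℝ, 0 ≤ s → s ≤ t →
        Real.exp (t - s) * |x| ≤ N * Real.exp (α * t) * Real.exp (-ν * (t - s)) * |x|) ∧
    (∀ (t₀ : ℝ) (x₀ : EuclideanSpace ℝ (Fin 2)), 0 ≤ t₀ →
      Tendsto (fun t : ℝ => ‖U t t₀ (Q t₀ x₀)‖) atTop (nhds 0)) := by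
  refine ⟨?_, ?_, ?_, ?_⟩
  · intro t s hs hst v
    rw [hU, hP, norm_smul, Real.norm_eq_abs, abs_of_pos (Real.exp_pos _), vec2_norm_left]
    exact mul_le_mul_of_nonneg_left (coord_le_norm v 0) (Real.exp_pos _).le
  · intro t s hs hst v
    rw [hQ, norm_smul, Real.norm_eq_abs, abs_of_pos (Real.exp_pos _), vec2_norm_right]
    calc Real.exp (t - s) * |v 1| ≤ Real.exp (t - s) * ‖v‖ :=
          mul_le_mul_of_nonneg_left (coord_le_norm v 1) (Real.exp_pos _).le
      _ ≤ Real.exp (-(t - s) + 2 * t) * ‖v‖ := by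
          apply mul_le_mul_of_nonneg_right _ (norm_nonneg v)
          apply Real.exp_le_exp.mpr
          linarith
  · rintro ⟨N, α, ν, hN, hα, hν, hαν, h⟩
    set t := Real.log (N + 1) with ht
    have ht0 : 0 ≤ t := Real.log_nonneg (by linarith)
    have := h t 0 1 le_rfl ht0
    simp only [abs_one, mul_one, sub_zero] at this
    have h1 : Real.exp t = N + 1 := Real.exp_log (by linarith)
    have h2 : N * Real.exp (α * t) * Real.exp (-ν * t) = N * Real.exp ((α - ν) * t) := by
      rw [mul_assoc, ← Real.exp_add]; ring_nf
    rw [h1, h2] at this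
    have h3 : Real.exp ((α - ν) * t) ≤ 1 := by
      apply Real.exp_le_one_iff.mpr
      have : (α - ν) * t ≤ 0 := mul_nonpos_of_nonpos_of_nonneg (by linarith) ht0
      linarith
    nlinarith
  · intro t₀ x₀ ht₀
    have heq : (fun t : ℝ => ‖U t t₀ (Q t₀ x₀)‖)
        = fun t : ℝ => Real.exp (-(t - t₀)) * |x₀ 1| := by
      funext t
      rw [hU, hQ, norm_smul, Real.norm_eq_abs, abs_of_pos (Real.exp_pos _), vec2_norm_right]
    rw [heq]
    have : Tendsto (fun t : ℝ => Real.exp (-(t - t₀))) atTop (nhds 0) := by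
      have := Real.tendsto_exp_atBot
      apply this.comp
      have : (fun t : ℝ => -(t - t₀)) = fun t => -t + t₀ := by funext t; ring
      rw [this]
      exact tendsto_atBot_add_const_right _ _ tendsto_neg_atTop_atBot
    simpa using this.mul_const |x₀ 1|
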